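/- arXiv:2206.00376 — 2 statements merged into one kernel-verified Lean document; each statement's English description precedes it below -/
import Mathlib

section
/- If an infinite word x has its string attractor profile function bounded by a constant k (i.e., s_x(n) < k for all n > 0), then its factor complexity satisfies p_x(n) ≤ n · k for all n > 0. -/
open scoped Classical

/-- `u` occurs in `w` starting at (0-based) position `i`. -/
def occursAt {α : Type*} (w u : List α) (i : ℕ) : Prop := (w.drop i).take u.length = u

/-- `u` is a factor of the finite word `w`. -/
def IsFactorOf {α : Type*} (w u : List α) : Prop := ∃ i, occursAt w u i

/-- `Γ` is a string attractor of the finite word `w` (positions are 0-based). -/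
def IsAttractor {α : Type*} (w : List α) (Γ : Finset ℕ) : Prop :=
  (∀ k ∈ Γ, k < w.length) ∧
  ∀ u : List α, u ≠ [] → IsFactorOf w u →
    ∃ i, occursAt w u i ∧ ∃ k ∈ Γ, i ≤ k ∧ k < i + u.length

/-- `γ*(w)`: minimum size of a string attractor of `w`. -/
noncomputable def gammaStar {α : Type*} (w : List α) : ℕ :=
  sInf {n | ∃ Γ : Finset ℕ, IsAttractor w Γ ∧ Γ.card = n}

/-- `span(w)`: minimum of (rightmost − leftmost position) over string attractors of `w`. -/
noncomputable def spanW {α : Type*} (w : List α) : ℕ :=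
  sInf {d | ∃ Γ : Finset ℕ, IsAttractor w Γ ∧ sSup (Γ : Set ℕ) - sInf (Γ : Set ℕ) = d}

/-- `lm(w)`: minimum rightmost position over string attractors of `w`. -/
noncomputable def lmW {α : Type*} (w : List α) : ℕ :=
  sInf {m | ∃ Γ : Finset ℕ, IsAttractor w Γ ∧ sSup (Γ : Set ℕ) = m}

/-- prefix of length `n` of the infinite word `x`. -/
def pref {α : Type*} (x : ℕ → α) (n : ℕ) : List α := (List.range n).map x

/-- the factor of length `m` of `x` starting at position `i`. -/
def factorAt {α : Type*} (x : ℕ → α) (i m : ℕ) : List α := (List.range m).map (fun t => x (i + t))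

/-- `u` is a factor of the infinite word `x`. -/
def IsFactorInf {α : Type*} (x : ℕ → α) (u : List α) : Prop := ∃ i, u = factorAt x i u.length

/-- factor complexity `p_x(n)`. -/
noncomputable def complexity {α : Type*} (x : ℕ → α) (n : ℕ) : ℕ :=
  {u : List α | u.length = n ∧ IsFactorInf x u}.ncard

/-- appearance function `A_x(n)`: least `m` such that the prefix of length `m`
contains all factors of `x` of length `n`. -/
noncomputable def appearance {α : Type*} (x : ℕ → α) (n : ℕ) : ℕ :=
  sInf {m | ∀ u : List α, u.length = n → IsFactorInf x u → IsFactorOf (pref x m) u}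

/-- `x` is ultimately periodic. -/
def UltPeriodic {α : Type*} (x : ℕ → α) : Prop :=
  ∃ p N : ℕ, 0 < p ∧ ∀ i, N ≤ i → x (i + p) = x i

/-- `x` is recurrent: every factor occurs infinitely often. -/
def Recurrent {α : Type*} (x : ℕ → α) : Prop :=
  ∀ u : List α, IsFactorInf x u → ∀ N : ℕ, ∃ i, N ≤ i ∧ u = factorAt x i u.length

/-- `u ^ k`: the `k`-th power of a finite word. -/
def listPow {α : Type*} (u : List α) : ℕ → List α
  | 0 => []
  | k + 1 => u ++ listPow u k

/-- `x` is ω-power free. -/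
def OmegaPowerFree {α : Type*} (x : ℕ → α) : Prop :=
  ∀ u : List α, u ≠ [] → IsFactorInf x u → ∃ k : ℕ, ¬ IsFactorInf x (listPow u k)

lemma occursAt_pref {α : Type*} (x : ℕ → α) {i n m : ℕ} (h : i + n ≤ m) :
    occursAt (pref x m) (factorAt x i n) i := by
  unfold occursAt
  apply List.ext_getElem
  · simp [pref, factorAt]; omega
  · intro t h1 h2
    simp [pref, factorAt]

lemma attractor_range {α : Type*} (w : List α) :
    IsAttractor w (Finset.range w.length) := by
  constructor
  · intro k hk; simpa using hk
  · rintro u hu ⟨i, hi⟩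
    have hlen : u.length ≤ w.length - i := by
      have := congrArg List.length hi; simp at this; omega
    have hupos : 0 < u.length := List.length_pos_iff.mpr hu
    exact ⟨i, hi, i, by simp; omega, le_refl i, by omega⟩

lemma gammaStar_attained {α : Type*} (w : List α) :
    ∃ Γ : Finset ℕ, IsAttractor w Γ ∧ Γ.card = gammaStar w := by
  have hne : {n | ∃ Γ : Finset ℕ, IsAttractor w Γ ∧ Γ.card = n}.Nonempty :=
    ⟨_, Finset.range w.length, attractor_range w, rfl⟩
  exact Nat.sInf_mem hne

/-- if `s_x(n) < k` for all `n > 0` then `p_x(n) ≤ n·k`. -/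
theorem stmt2 {α : Type*} [Fintype α] (x : ℕ → α) (k : ℕ)
    (hk : ∀ n, 0 < n → gammaStar (pref x n) < k) :
    ∀ n, 0 < n → complexity x n ≤ n * k := by
  intro n hn
  have hcompl : complexity x n = {u : List α | u.length = n ∧ IsFactorInf x u}.ncard := rfl
  set S : Set (List α) := {u : List α | u.length = n ∧ IsFactorInf x u} with hS
  have hfin : S.Finite := by
    apply Set.Finite.subset (List.finite_length_eq α n)
    intro u hu; exact hu.1
  rcases S.eq_empty_or_nonempty with hSe | hSne
  · rw [hcompl, hSe]; simp
  -- choose an occurrence index for each factor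
  have hI : ∀ u ∈ S, ∃ i, u = factorAt x i n := by
    rintro u ⟨hul, i, hi⟩
    exact ⟨i, by rw [← hul]; exact hi⟩
  choose! I hIspec using hI
  -- a prefix length containing all factors of length n
  set m : ℕ := hfin.toFinset.sup (fun u => I u + n) with hm
  have hmem : ∀ u ∈ S, I u + n ≤ m := by
    intro u hu
    exact Finset.le_sup (f := fun u => I u + n) (hfin.mem_toFinset.mpr hu)
  have hmpos : 0 < m := by
    obtain ⟨u, hu⟩ := hSne
    have := hmem u hu; omega
  obtain ⟨Γ, hΓ, hΓcard⟩ := gammaStar_attained (pref x m)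
  have hΓk : Γ.card < k := by
    rw [hΓcard]; exact hk m hmpos
  -- every factor occurs in the prefix crossing an attractor position
  have hcross : ∀ u ∈ S, ∃ j p : ℕ,
      occursAt (pref x m) u j ∧ p ∈ Γ ∧ j ≤ p ∧ p < j + n := by
    intro u hu
    have hune : u ≠ [] := by
      intro h; rw [h] at hu; exact absurd hu.1.symm (by omega : ¬ n = 0)
    have hfac : IsFactorOf (pref x m) u := by
      refine ⟨I u, ?_⟩
      have := occursAt_pref x (hmem u hu)
      rw [← hIspec u hu] at this
      exact this
    obtain ⟨j, hj, p, hp, h1, h2⟩ := hΓ.2 u hune hfac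
    exact ⟨j, p, hj, hp, h1, by rwa [hu.1] at h2⟩
  choose! j p hocc hpΓ hjp hpj using hcross
  -- injection from S into Γ × [0, n)
  have hinj : Set.InjOn (fun u => (p u, p u - j u)) S := by
    intro u hu v hv huv
    simp only [Prod.mk.injEq] at huv
    have hju : j u = j v := by
      have h1 := hjp u hu; have h2 := hjp v hv; omega
    have h1 := hocc u hu; have h2 := hocc v hv
    unfold occursAt at h1 h2
    rw [(hu : u ∈ S).1, ← (hv : v ∈ S).1, hju] at h1
    exact h1.symm.trans h2
  have hmaps : ∀ u ∈ S, (p u, p u - j u) ∈ ((Γ ×ˢ Finset.range n : Finset (ℕ × ℕ)) : Set (ℕ × ℕ)) := by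
    intro u hu
    simp only [Finset.coe_product, Set.mem_prod, Finset.mem_coe, Finset.coe_range,
      Set.mem_Iio]
    exact ⟨hpΓ u hu, by have := hpj u hu; have := hjp u hu; omega⟩
  have hcard := Set.ncard_le_ncard_of_injOn _ hmaps hinj
    (Finset.finite_toSet _)
  rw [hcompl]
  calc S.ncard ≤ ((Γ ×ˢ Finset.range n : Finset (ℕ × ℕ)) : Set (ℕ × ℕ)).ncard := hcard
    _ = Γ.card * n := by rw [Set.ncard_coe_finset]; simp [Finset.card_product]
    _ ≤ k * n := Nat.mul_le_mul_right n (le_of_lt hΓk)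
    _ = n * k := Nat.mul_comm k n
end

section
/- If an infinite word x is ultimately periodic, then its string attractor profile function s_x is bounded by a constant, i.e., s_x(n) = Θ(1). -/
open scoped Classical

lemma pref_length' {α : Type*} (x : ℕ → α) (n : ℕ) : (pref x n).length = n := by
  simp [pref]

lemma occursAt_pref_elim {α : Type*} {x : ℕ → α} {n : ℕ} {u : List α} {i : ℕ}
    (hu : u ≠ []) (h : occursAt (pref x n) u i) :
    i + u.length ≤ n ∧ ∀ t (ht : t < u.length), u[t] = x (i + t) := by
  have hlen : 0 < u.length := List.length_pos_iff.mpr hu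
  have hl := congrArg List.length h
  simp [pref] at hl
  have hle : i + u.length ≤ n := by omega
  refine ⟨hle, fun t ht => ?_⟩
  rw [List.getElem_of_eq h.symm ht, List.getElem_take, List.getElem_drop]
  simp [pref, List.getElem_map]

lemma occursAt_pref_intro {α : Type*} {x : ℕ → α} {n : ℕ} {u : List α} {i : ℕ}
    (hle : i + u.length ≤ n) (hval : ∀ t (ht : t < u.length), u[t] = x (i + t)) :
    occursAt (pref x n) u i := by
  apply List.ext_getElem
  · simp [pref]; omega
  · intro t h1 h2
    rw [List.getElem_take, List.getElem_drop, hval t h2]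
    simp [pref, List.getElem_map]

/-- ultimately periodic words have bounded string attractor profile. -/
theorem stmt4 {α : Type*} (x : ℕ → α) (h : UltPeriodic x) :
    ∃ C : ℕ, ∀ n : ℕ, gammaStar (pref x n) ≤ C := by
  classical
  obtain ⟨p, N, hp, hper⟩ := h
  refine ⟨N + p, fun n => ?_⟩
  have hattr : IsAttractor (pref x n) (Finset.range (min n (N + p))) := by
    constructor
    · intro k hk
      rw [pref_length']
      simp only [Finset.mem_range] at hk
      omega
    · intro u hu hf
      have hlen : 0 < u.length := List.length_pos_iff.mpr hu
      have hne : ∃ i, occursAt (pref x n) u i := hf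
      set i₀ := Nat.find hne with hi₀def
      have h₀ : occursAt (pref x n) u i₀ := Nat.find_spec hne
      obtain ⟨hle, hval⟩ := occursAt_pref_elim hu h₀
      have hi₀ : i₀ < N + p := by
        by_contra hge
        push_neg at hge
        have hocc : occursAt (pref x n) u (i₀ - p) := by
          apply occursAt_pref_intro (by omega)
          intro t ht
          rw [hval t ht]
          have he : (i₀ - p + t) + p = i₀ + t := by omega
          rw [← he]
          exact hper _ (by omega)
        have := Nat.find_min' hne hocc
        omega
      exact ⟨i₀, h₀, i₀, Finset.mem_range.mpr (by omega), le_refl _, by omega⟩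
  have h1 : gammaStar (pref x n) ≤ (Finset.range (min n (N + p))).card :=
    Nat.sInf_le ⟨_, hattr, rfl⟩
  calc gammaStar (pref x n) ≤ _ := h1
    _ ≤ N + p := by simp
end
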